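/- arXiv:2104.13213 — 2 statements merged into one kernel-verified Lean document; each statement's English description precedes it below -/
import Mathlib

section
/- For every w, w' ∈ W̃ and every α ∈ Φ, one has w <_α w' if and only if w ∈ W̃_α w' and w(x) <_α w'(x) for all x ∈ A₀ (i.e., w'(x) − w(x) is a positive multiple of α̌ for all x ∈ A₀). Here W̃_α ⊂ W̃ is the subgroup generated by the affine reflections s_{(α,n)}, n ∈ ℤ. -/
open scoped Classical

noncomputable section

/-- A (reduced, crystallographic) root system `Φ` in the dual of a real vector space `V`,
together with a chosen coroot `α̌ ∈ V` for every root `α`. -/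
structure RootSystemData (V : Type*) [AddCommGroup V] [Module ℝ V] where
  roots : Set (Module.Dual ℝ V)
  coroot : Module.Dual ℝ V → V
  finite : roots.Finite
  ne_zero : ∀ α ∈ roots, α ≠ 0
  root_coroot_two : ∀ α ∈ roots, α (coroot α) = 2
  reflect_mem : ∀ α ∈ roots, ∀ β ∈ roots, β - β (coroot α) • α ∈ roots
  crystallographic : ∀ α ∈ roots, ∀ β ∈ roots, ∃ n : ℤ, β (coroot α) = (n : ℝ)
  reduced : ∀ α ∈ roots, ∀ c : ℝ, c • α ∈ roots → c = 1 ∨ c = -1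
  span_top : Submodule.span ℝ roots = ⊤

section
variable {V : Type*} [AddCommGroup V] [Module ℝ V]

/-- The simple elements of a positive system `P`: elements which are not sums of two
elements of `P`. -/
def simplesOf (P : Set (Module.Dual ℝ V)) : Set (Module.Dual ℝ V) :=
  {α | α ∈ P ∧ ¬∃ β ∈ P, ∃ γ ∈ P, α = β + γ}

/-- The affine root `(α, n)` viewed as the affine function `x ↦ α(x) + n`. -/
def aev (α : Module.Dual ℝ V) (n : ℤ) : V → ℝ := fun x => α x + (n : ℝ)

/-- `π : W̃ → Λ`, `w ↦ w(0)`. -/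
def piL (w : Equiv.Perm V) : V := w 0

/-- Translation by `μ`, as an element of the group of permutations of `V`. -/
def transl (μ : V) : Equiv.Perm V := Equiv.addLeft μ

end

namespace RootSystemData

variable {V : Type*} [AddCommGroup V] [Module ℝ V]

variable (RS : RootSystemData V)

/-- A point is regular if it lies on no root hyperplane. -/
def IsRegularPt (x : V) : Prop := ∀ α ∈ RS.roots, α x ≠ 0

/-- Weyl chambers of `Φ`: connected components of the set of regular points,
described by the strict sign pattern of a regular point. -/
def IsChamber (C : Set V) : Prop :=
  ∃ v, RS.IsRegularPt v ∧ C = {x | ∀ α ∈ RS.roots, 0 < α v → 0 < α x}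

/-- The type `𝒞` of Weyl chambers. -/
abbrev ChamberT := {C : Set V // RS.IsChamber C}

/-- The set `Φ_C` of `C`-positive roots. -/
def pos (C : Set V) : Set (Module.Dual ℝ V) := {α | α ∈ RS.roots ∧ ∀ x ∈ C, 0 < α x}


/-- The set `Δ_C` of `C`-simple roots. -/
def simples (C : Set V) : Set (Module.Dual ℝ V) := simplesOf (RS.pos C)

/-- The affine reflection `s_{(α,n)} : x ↦ x − (α(x)+n) • α̌`. -/
def sAff (α : Module.Dual ℝ V) (n : ℤ) : Equiv.Perm V :=
  if h : α (RS.coroot α) = 2 then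
    Function.Involutive.toPerm (fun x => x - (α x + (n : ℝ)) • RS.coroot α) (by
      intro x
      simp only [map_sub, map_smul, smul_eq_mul, h]
      match_scalars <;> ring)
  else Equiv.refl V


/-- Positivity of an affine function `f` (which is required to be an affine root
`(α,n)`), relative to a positive system `P ⊂ Φ`:  `n > 0`, or `n = 0 ∧ α ∈ P`. -/
def IsPosAff (P : Set (Module.Dual ℝ V)) (f : V → ℝ) : Prop :=
  ∃ α ∈ RS.roots, ∃ n : ℤ, f = aev α n ∧ (0 < n ∨ (n = 0 ∧ α ∈ P))

/-- The subgroup of the affine Weyl group generated by the reflections `s_{(α,n)}`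
with `α ∈ Φ ∩ Φ'`. -/
def affWeylOf (Φ' : Set (Module.Dual ℝ V)) : Subgroup (Equiv.Perm V) :=
  Subgroup.closure {g | ∃ α ∈ RS.roots ∩ Φ', ∃ n : ℤ, g = RS.sAff α n}

/-- The affine Weyl group `W̃ = W ⋉ Λ`, realized as the group generated by all affine
reflections `s_{(α,n)}`. -/
def affWeyl : Subgroup (Equiv.Perm V) := RS.affWeylOf Set.univ

/-- The finite Weyl group `W`, generated by the linear reflections `s_α = s_{(α,0)}`. -/
def weyl : Subgroup (Equiv.Perm V) :=
  Subgroup.closure {g | ∃ α ∈ RS.roots, g = RS.sAff α 0}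

/-- The subgroup `W̃_α` generated by the reflections `s_{(α,n)}`, `n ∈ ℤ`. -/
def reflSubgroup (α : Module.Dual ℝ V) : Subgroup (Equiv.Perm V) :=
  Subgroup.closure {g | ∃ n : ℤ, g = RS.sAff α n}


/-- The coroot lattice `Λ ⊂ V`. -/
def corootLattice : AddSubgroup V := AddSubgroup.closure (RS.coroot '' RS.roots)


/-- The (open) fundamental alcove `A₀ ⊂ C₀`, whose closure contains `0`. -/
def alcove (C₀ : Set V) : Set V := {x | ∀ α ∈ RS.pos C₀, 0 < α x ∧ α x < 1}

/-- `w ∈ C`, i.e. `w(A₀) ⊂ C`. -/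
def MemC (C₀ : Set V) (w : Equiv.Perm V) (C : Set V) : Prop :=
  ∀ x ∈ RS.alcove C₀, w x ∈ C

/-- The inversion set of `w`: positive affine roots `f` with `w⁻¹(f) = f ∘ w`
negative. -/
def invSet (P : Set (Module.Dual ℝ V)) (w : Equiv.Perm V) : Set (V → ℝ) :=
  {f | RS.IsPosAff P f ∧ ¬ RS.IsPosAff P (fun x => f (w x))}

/-- The length function `l` on `W̃` determined by the fundamental alcove:
the number of inversions. -/
def len (C₀ : Set V) (w : Equiv.Perm V) : ℕ := (RS.invSet (RS.pos C₀) w).ncard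

/-- The (strict) Bruhat order on `W̃`: the transitive closure of
`x < s_{(α,n)} x` whenever the length increases. -/
def bruhatLT (C₀ : Set V) : Equiv.Perm V → Equiv.Perm V → Prop :=
  Relation.TransGen (fun x y =>
    (∃ α ∈ RS.roots, ∃ n : ℤ, y = RS.sAff α n * x) ∧ RS.len C₀ x < RS.len C₀ y)

/-- The Bruhat order `≤` on `W̃`. -/
def bruhatLE (C₀ : Set V) (x y : Equiv.Perm V) : Prop := x = y ∨ RS.bruhatLT C₀ x y

/-- One step of the ordering `<_{Φ'}`:  `x = s_{(α,n)} y <_{(α,n)} y` with `α ∈ Φ'`,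
i.e. `y⁻¹((α,n)) > 0` (positivity of affine roots relative to `P`). -/
def stepRel (P Φ' : Set (Module.Dual ℝ V)) (x y : Equiv.Perm V) : Prop :=
  ∃ α ∈ RS.roots ∩ Φ', ∃ n : ℤ,
    x = RS.sAff α n * y ∧ RS.IsPosAff P (fun v => aev α n (y v))

/-- The ordering `<_{Φ'}` on `W̃` (with affine-root positivity relative to `P`). -/
def ordLT (P Φ' : Set (Module.Dual ℝ V)) : Equiv.Perm V → Equiv.Perm V → Prop :=
  Relation.TransGen (RS.stepRel P Φ')

/-- The ordering `≤_{Φ'}` on `W̃`. -/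
def ordLE (P Φ' : Set (Module.Dual ℝ V)) (x y : Equiv.Perm V) : Prop :=
  x = y ∨ RS.ordLT P Φ' x y

/-- The ordering `<_{Φ'}` on `V`: `x <_{Φ'} y` iff `y − x` is a positive linear
combination of coroots `α̌` with `α ∈ Φ'`. -/
def vecLT (Φ' : Set (Module.Dual ℝ V)) (x y : V) : Prop :=
  ∃ s : Finset (Module.Dual ℝ V), ∃ c : Module.Dual ℝ V → ℝ,
    s.Nonempty ∧ (∀ α ∈ s, α ∈ RS.roots ∩ Φ' ∧ 0 < c α) ∧
      y - x = ∑ α ∈ s, c α • RS.coroot α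

/-- The ordering `≤_{Φ'}` on `V`. -/
def vecLE (Φ' : Set (Module.Dual ℝ V)) (x y : V) : Prop := x = y ∨ RS.vecLT Φ' x y

/-- `ψ` is the fundamental weight of the chamber `C` corresponding to the simple root
`α ∈ Δ_C`:  `⟨ψ, β̌⟩ = δ_{αβ}` for `β ∈ Δ_C`. -/
def PairsIn (C : Set V) (ψ α : Module.Dual ℝ V) : Prop :=
  α ∈ RS.simples C ∧ ∀ β ∈ RS.simples C, ψ (RS.coroot β) = if β = α then 1 else 0

/-- `ψv` is the fundamental coweight of the chamber `C` corresponding to the simple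
root `α ∈ Δ_C`:  `⟨β, ψv⟩ = δ_{αβ}` for `β ∈ Δ_C`. -/
def CoPairsIn (C : Set V) (α : Module.Dual ℝ V) (ψv : V) : Prop :=
  α ∈ RS.simples C ∧ ∀ β ∈ RS.simples C, β ψv = if β = α then 1 else 0

/-- `ψ ∈ Ψ_C` with corresponding fundamental coweight `ψ̌ = ψv`. -/
def IsFundPair (C : Set V) (ψ : Module.Dual ℝ V) (ψv : V) : Prop :=
  ∃ α, RS.PairsIn C ψ α ∧ RS.CoPairsIn C α ψv

/-- `ψ ∈ Ψ_C`. -/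
def IsFundWeightOf (C : Set V) (ψ : Module.Dual ℝ V) : Prop := ∃ α, RS.PairsIn C ψ α

/-- `Φ(ψ) = {α ∈ Φ : ⟨α, ψ̌⟩ ≥ 0}` (described via the coweight `ψv = ψ̌`). -/
def phiNonneg (ψv : V) : Set (Module.Dual ℝ V) := {α | α ∈ RS.roots ∧ 0 ≤ α ψv}

/-- `Φ^ψ = {α ∈ Φ : ⟨α, ψ̌⟩ = 0}` (described via the coweight `ψv = ψ̌`). -/
def phiZero (ψv : V) : Set (Module.Dual ℝ V) := {α | α ∈ RS.roots ∧ α ψv = 0}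

/-- The set `W̃_ψ` of `w ∈ W̃` with `w⁻¹(Φ̃^ψ_{>0}) ⊂ Φ̃_{>0}`; here `Φψ = Φ^ψ`,
`P` is the chosen positive system of `Φ^ψ` and `C₀` determines `Φ̃_{>0}`. -/
def WpsiSet (C₀ : Set V) (Φψ P : Set (Module.Dual ℝ V)) : Set (Equiv.Perm V) :=
  {w | ∀ α ∈ RS.roots ∩ Φψ, ∀ n : ℤ, (0 < n ∨ (n = 0 ∧ α ∈ P)) →
      RS.IsPosAff (RS.pos C₀) (fun v => aev α n (w v))}

/-- Admissibility of a tuple `w̄ ∈ W̃^𝒞`: `w_{s_α(C)} ≤_α w_C` for all `C ∈ 𝒞`,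
`α ∈ Δ_C`. -/
def AdmissibleW (C₀ : Set V) (w : RS.ChamberT → Equiv.Perm V) : Prop :=
  ∀ C : RS.ChamberT, ∀ α ∈ RS.simples C.1, ∀ C' : RS.ChamberT,
    C'.1 = ⇑(RS.sAff α 0) '' C.1 → RS.ordLE (RS.pos C₀) {α} (w C') (w C)

/-- Quasi-admissibility of a tuple `w̄ ∈ W̃^𝒞`: `w_{s_α(C)} ∈ W̃_α w_C`. -/
def QuasiAdmissibleW (w : RS.ChamberT → Equiv.Perm V) : Prop :=
  ∀ C : RS.ChamberT, ∀ α ∈ RS.simples C.1, ∀ C' : RS.ChamberT,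
    C'.1 = ⇑(RS.sAff α 0) '' C.1 → ∃ u ∈ RS.reflSubgroup α, w C' = u * w C

/-- Admissibility of a tuple `μ̄ ∈ V^𝒞`: `μ_C − μ_{s_α(C)} ∈ ℝ_{≥0} α̌`. -/
def AdmissibleV (μ : RS.ChamberT → V) : Prop :=
  ∀ C : RS.ChamberT, ∀ α ∈ RS.simples C.1, ∀ C' : RS.ChamberT,
    C'.1 = ⇑(RS.sAff α 0) '' C.1 → ∃ c : ℝ, 0 ≤ c ∧ μ C - μ C' = c • RS.coroot α

/-- Quasi-admissibility of a tuple `μ̄ ∈ V^𝒞`: `μ_C − μ_{s_α(C)} ∈ ℝ α̌`. -/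
def QuasiAdmissibleV (μ : RS.ChamberT → V) : Prop :=
  ∀ C : RS.ChamberT, ∀ α ∈ RS.simples C.1, ∀ C' : RS.ChamberT,
    C'.1 = ⇑(RS.sAff α 0) '' C.1 → ∃ c : ℝ, μ C - μ C' = c • RS.coroot α

/-- `m`-regularity of a tuple `μ̄ ∈ V^𝒞`: `⟨α, μ_C⟩ ≥ m` for every `C ∈ 𝒞` and
`α ∈ Φ_C`. -/
def RegularVAt (m : ℝ) (μ : RS.ChamberT → V) : Prop :=
  ∀ C : RS.ChamberT, ∀ α ∈ RS.pos C.1, m ≤ α (μ C)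

/-- `m`-regularity of a tuple `w̄ ∈ W̃^𝒞`. -/
def RegularWAt (m : ℝ) (w : RS.ChamberT → Equiv.Perm V) : Prop :=
  RS.RegularVAt m (fun C => piL (w C))

/-- Regularity of a tuple `μ̄ ∈ V^𝒞`. -/
def RegularV (μ : RS.ChamberT → V) : Prop := ∃ m : ℝ, 0 < m ∧ RS.RegularVAt m μ

/-- Regularity of a tuple `w̄ ∈ W̃^𝒞`. -/
def RegularW (w : RS.ChamberT → Equiv.Perm V) : Prop := ∃ m : ℝ, 0 < m ∧ RS.RegularWAt m w

/-- `e` is the quasi-admissible tuple `ē_ψ` corresponding to the standard basis vector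
`e_ψ ∈ ℤ^Ψ`:  `(ē_ψ)_C = α̌` if `α ∈ Δ_C` corresponds to `ψ ∈ Ψ_C`, and `= 0` if
`ψ ∉ Ψ_C`. -/
def IsEPsiTuple (ψ : Module.Dual ℝ V) (e : RS.ChamberT → V) : Prop :=
  ∀ C : RS.ChamberT,
    (∀ α, RS.PairsIn C.1 ψ α → e C = RS.coroot α) ∧
      ((¬∃ α, RS.PairsIn C.1 ψ α) → e C = 0)

end RootSystemData

/-!
Affine roots take no integer value on the alcove `A₀`, so the positivity of an affine root is
decided by its sign at any single point of `A₀`. A step `s_{(α,n)} y <_{(α,n)} y` therefore moves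
every point `y(x)`, `x ∈ A₀`, by the positive multiple `α(y x) + n` of `-α̌`; this gives the forward
implication. Conversely, `W̃_α` consists of the reflections `s_{(α,n)}` and the translations by
multiples of `α̌`. A reflection moving `A₀` downwards is a single step, and the translation by
`-α̌` factors as `s_{(α,n+1)} s_{(α,n)}` for every `n`; choosing `n` with `0 < α(y x) + n < 1`
makes both factors descents.
-/

theorem transl_add {V : Type*} [AddCommGroup V] [Module ℝ V] (a b : V) :
    transl (a + b) = transl a * transl b :=
  Equiv.ext fun x => add_assoc a b x

theorem transl_zero {V : Type*} [AddCommGroup V] [Module ℝ V] : transl (0 : V) = 1 :=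
  Equiv.ext zero_add

theorem aev_inj {V : Type*} [AddCommGroup V] [Module ℝ V] {β β' : Module.Dual ℝ V}
    {k k' : ℤ} : aev β k = aev β' k' ↔ β = β' ∧ k = k' := by
  refine ⟨fun h => ?_, by rintro ⟨rfl, rfl⟩; rfl⟩
  have hk : k = k' := by simpa [aev] using congrFun h 0
  subst hk
  exact ⟨LinearMap.ext fun x => by simpa [aev] using congrFun h x, rfl⟩

namespace RootSystemData

variable {V : Type*} [AddCommGroup V] [Module ℝ V] (RS : RootSystemData V)
  {α β : Module.Dual ℝ V}

theorem coroot_ne_zero (hα : α ∈ RS.roots) : RS.coroot α ≠ 0 := fun h => by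
  simpa [h] using RS.root_coroot_two α hα

theorem smul_coroot_inj (hα : α ∈ RS.roots) {a b : ℝ} :
    a • RS.coroot α = b • RS.coroot α ↔ a = b :=
  (smul_left_injective ℝ (RS.coroot_ne_zero hα)).eq_iff

theorem neg_mem_roots (hβ : β ∈ RS.roots) : -β ∈ RS.roots := by
  have h := RS.reflect_mem β hβ β hβ
  rwa [RS.root_coroot_two β hβ, two_smul, sub_add_cancel_left] at h

theorem sAff_apply (hα : α ∈ RS.roots) (n : ℤ) (x : V) :
    RS.sAff α n x = x - aev α n x • RS.coroot α := by
  rw [sAff, dif_pos (RS.root_coroot_two α hα)]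
  rfl

theorem sAff_mul_sAff (hα : α ∈ RS.roots) (m n : ℤ) :
    RS.sAff α m * RS.sAff α n = transl ((n - m) • RS.coroot α) := by
  ext x
  simp only [Equiv.Perm.mul_apply, RS.sAff_apply hα, aev, map_sub, map_smul, smul_eq_mul,
    RS.root_coroot_two α hα, transl, Equiv.coe_addLeft]
  module

theorem sAff_add_one_mul_sAff (hα : α ∈ RS.roots) (n : ℤ) :
    RS.sAff α (n + 1) * RS.sAff α n = transl (-RS.coroot α) := by
  rw [sAff_mul_sAff RS hα, sub_add_cancel_left, neg_one_zsmul]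

theorem sAff_inv (hα : α ∈ RS.roots) (n : ℤ) : (RS.sAff α n)⁻¹ = RS.sAff α n :=
  inv_eq_of_mul_eq_one_left <| by
    rw [sAff_mul_sAff RS hα, sub_self, zero_smul, transl_zero]

theorem sAff_mul_transl (hα : α ∈ RS.roots) (n k : ℤ) :
    RS.sAff α n * transl (k • RS.coroot α) = RS.sAff α (n + k) := by
  ext x
  simp only [Equiv.Perm.mul_apply, RS.sAff_apply hα, aev, transl, Equiv.coe_addLeft, map_add,
    map_zsmul, RS.root_coroot_two α hα]
  push_cast
  module

theorem eq_transl_or_eq_sAff_of_mem_reflSubgroup (hα : α ∈ RS.roots) {u : Equiv.Perm V}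
    (hu : u ∈ RS.reflSubgroup α) :
    (∃ k : ℤ, u = transl (k • RS.coroot α)) ∨ ∃ n : ℤ, u = RS.sAff α n := by
  have step : ∀ (n : ℤ) (y : Equiv.Perm V),
      ((∃ k : ℤ, y = transl (k • RS.coroot α)) ∨ ∃ m : ℤ, y = RS.sAff α m) →
      (∃ k : ℤ, RS.sAff α n * y = transl (k • RS.coroot α)) ∨
        ∃ m : ℤ, RS.sAff α n * y = RS.sAff α m := by
    rintro n y (⟨k, rfl⟩ | ⟨m, rfl⟩)
    · exact Or.inr ⟨n + k, RS.sAff_mul_transl hα n k⟩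
    · exact Or.inl ⟨m - n, RS.sAff_mul_sAff hα n m⟩
  induction hu using Subgroup.closure_induction_left with
  | one => exact Or.inl ⟨0, by rw [zero_smul, transl_zero]⟩
  | mul_left x hx y _ ih =>
    obtain ⟨n, rfl⟩ := hx
    exact step n y ih
  | inv_mul_cancel x hx y _ ih =>
    obtain ⟨n, rfl⟩ := hx
    rw [RS.sAff_inv hα]
    exact step n y ih

theorem sAff_mem_affWeyl (hα : α ∈ RS.roots) (n : ℤ) : RS.sAff α n ∈ RS.affWeyl :=
  Subgroup.subset_closure ⟨α, ⟨hα, trivial⟩, n, rfl⟩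

theorem transl_neg_coroot_mem_affWeyl (hα : α ∈ RS.roots) :
    transl (-RS.coroot α) ∈ RS.affWeyl := by
  rw [← RS.sAff_add_one_mul_sAff hα 0]
  exact mul_mem (RS.sAff_mem_affWeyl hα _) (RS.sAff_mem_affWeyl hα _)

variable {C₀ : Set V}

theorem mem_pos_or_neg_mem_pos (hC₀ : RS.IsChamber C₀) (hβ : β ∈ RS.roots) :
    β ∈ RS.pos C₀ ∨ -β ∈ RS.pos C₀ := by
  obtain ⟨v, hreg, rfl⟩ := hC₀
  rcases (hreg β hβ).lt_or_gt with hv | hv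
  · exact Or.inr ⟨RS.neg_mem_roots hβ, fun x hx => hx _ (RS.neg_mem_roots hβ) (by simpa using hv)⟩
  · exact Or.inl ⟨hβ, fun x hx => hx β hβ hv⟩

theorem alcove_nonempty (hC₀ : RS.IsChamber C₀) : (RS.alcove C₀).Nonempty := by
  obtain ⟨v, -, rfl⟩ := hC₀
  obtain ⟨M, hM⟩ := (RS.finite.image fun β => β v).bddAbove
  have hv : ∀ β ∈ RS.pos {x | ∀ α ∈ RS.roots, 0 < α v → 0 < α x}, 0 < β v :=
    fun β hβ => hβ.2 v fun _ _ h => h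
  refine ⟨(max M 0 + 1)⁻¹ • v, fun β hβ => ?_⟩
  have hβM : β v ≤ max M 0 := (hM ⟨β, hβ.1, rfl⟩).trans (le_max_left M 0)
  have hpos : 0 < max M 0 + 1 := by positivity
  rw [map_smul, smul_eq_mul, inv_mul_eq_div]
  exact ⟨div_pos (hv β hβ) hpos, (div_lt_one hpos).2 (by linarith)⟩

def IsAffRoot (f : V → ℝ) : Prop := ∃ β ∈ RS.roots, ∃ k : ℤ, f = aev β k

theorem IsPosAff.isAffRoot {P : Set (Module.Dual ℝ V)} {f : V → ℝ} (hf : RS.IsPosAff P f) :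
    RS.IsAffRoot f :=
  let ⟨β, hβ, k, h, _⟩ := hf
  ⟨β, hβ, k, h⟩

theorem isPosAff_iff_pos (hC₀ : RS.IsChamber C₀) {f : V → ℝ} (hf : RS.IsAffRoot f) {x : V}
    (hx : x ∈ RS.alcove C₀) : RS.IsPosAff (RS.pos C₀) f ↔ 0 < f x := by
  obtain ⟨β, hβ, k, rfl⟩ := hf
  have hpos : RS.IsPosAff (RS.pos C₀) (aev β k) ↔ 0 < k ∨ k = 0 ∧ β ∈ RS.pos C₀ := by
    refine ⟨fun ⟨β', _, k', heq, h⟩ => ?_, fun h => ⟨β, hβ, k, rfl, h⟩⟩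
    obtain ⟨rfl, rfl⟩ := aev_inj.1 heq
    exact h
  rw [hpos, aev]
  rcases RS.mem_pos_or_neg_mem_pos hC₀ hβ with hp | hp
  · obtain ⟨h0, h1⟩ := hx β hp
    simp only [hp, and_true, eq_comm (a := k), ← le_iff_lt_or_eq]
    constructor
    · intro hk
      have : (0 : ℝ) ≤ k := by exact_mod_cast hk
      linarith
    · intro h
      have : (-1 : ℝ) < k := by linarith
      have : (-1 : ℤ) < k := by exact_mod_cast this
      omega
  · obtain ⟨h0, h1⟩ := hx (-β) hp
    rw [LinearMap.neg_apply] at h0 h1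
    have hβ' : β ∉ RS.pos C₀ := fun h => by linarith [(hx β h).1]
    simp only [hβ', and_false, or_false]
    constructor
    · intro hk
      have : (1 : ℝ) ≤ k := by exact_mod_cast hk
      linarith
    · intro h
      have : (0 : ℝ) < k := by linarith
      exact_mod_cast this

theorem exists_int_add_mem_Ioo (hC₀ : RS.IsChamber C₀) {f : V → ℝ} (hf : RS.IsAffRoot f)
    {x : V} (hx : x ∈ RS.alcove C₀) : ∃ n : ℤ, 0 < f x + n ∧ f x + n < 1 := by
  obtain ⟨β, hβ, k, rfl⟩ := hf
  rcases RS.mem_pos_or_neg_mem_pos hC₀ hβ with hp | hp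
  · obtain ⟨h0, h1⟩ := hx β hp
    exact ⟨-k, by simp only [aev, Int.cast_neg]; constructor <;> linarith⟩
  · obtain ⟨h0, h1⟩ := hx (-β) hp
    rw [LinearMap.neg_apply] at h0 h1
    exact ⟨1 - k, by simp only [aev, Int.cast_sub, Int.cast_one]; constructor <;> linarith⟩

theorem isAffRoot_aev (hα : α ∈ RS.roots) (n : ℤ) : RS.IsAffRoot (aev α n) :=
  ⟨α, hα, n, rfl⟩

theorem IsAffRoot.comp_sAff {f : V → ℝ} (hf : RS.IsAffRoot f) {γ : Module.Dual ℝ V}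
    (hγ : γ ∈ RS.roots) (n : ℤ) : RS.IsAffRoot (f ∘ RS.sAff γ n) := by
  obtain ⟨β, hβ, k, rfl⟩ := hf
  obtain ⟨c, hc⟩ := RS.crystallographic γ hγ β hβ
  refine ⟨β - β (RS.coroot γ) • γ, RS.reflect_mem γ hγ β hβ, k - n * c, funext fun x => ?_⟩
  simp only [Function.comp_apply, RS.sAff_apply hγ, aev, map_sub, map_smul, smul_eq_mul,
    LinearMap.sub_apply, LinearMap.smul_apply, hc]
  push_cast
  ring

theorem IsAffRoot.comp_of_mem_affWeyl {f : V → ℝ} (hf : RS.IsAffRoot f) {y : Equiv.Perm V}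
    (hy : y ∈ RS.affWeyl) : RS.IsAffRoot (f ∘ y) := by
  induction hy using Subgroup.closure_induction_left generalizing f with
  | one => exact hf
  | mul_left x hx y _ ih =>
    obtain ⟨γ, ⟨hγ, -⟩, n, rfl⟩ := hx
    exact ih (hf.comp_sAff RS hγ n)
  | inv_mul_cancel x hx y _ ih =>
    obtain ⟨γ, ⟨hγ, -⟩, n, rfl⟩ := hx
    rw [RS.sAff_inv hγ]
    exact ih (hf.comp_sAff RS hγ n)

theorem sub_sAff_mul_apply (hα : α ∈ RS.roots) (n : ℤ) (y : Equiv.Perm V) (x : V) :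
    y x - (RS.sAff α n * y) x = aev α n (y x) • RS.coroot α := by
  rw [Equiv.Perm.mul_apply, RS.sAff_apply hα, sub_sub_cancel]

theorem exists_mem_reflSubgroup_of_ordLT {P : Set (Module.Dual ℝ V)} {w w' : Equiv.Perm V}
    (h : RS.ordLT P {α} w w') : ∃ u ∈ RS.reflSubgroup α, w = u * w' := by
  induction h using Relation.TransGen.trans_induction_on with
  | single h =>
    obtain ⟨_, ⟨-, rfl⟩, n, rfl, -⟩ := h
    exact ⟨RS.sAff _ n, Subgroup.subset_closure ⟨n, rfl⟩, rfl⟩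
  | trans _ _ ih₁ ih₂ =>
    obtain ⟨u₁, hu₁, rfl⟩ := ih₁
    obtain ⟨u₂, hu₂, rfl⟩ := ih₂
    exact ⟨u₁ * u₂, mul_mem hu₁ hu₂, mul_assoc u₁ u₂ _⟩

theorem exists_pos_smul_coroot_of_ordLT (hC₀ : RS.IsChamber C₀) {w w' : Equiv.Perm V}
    (h : RS.ordLT (RS.pos C₀) {α} w w') {x : V} (hx : x ∈ RS.alcove C₀) :
    ∃ c : ℝ, 0 < c ∧ w' x - w x = c • RS.coroot α := by
  induction h using Relation.TransGen.trans_induction_on with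
  | @single w w' h =>
    obtain ⟨_, ⟨hα, rfl⟩, n, rfl, hpos⟩ := h
    exact ⟨_, (RS.isPosAff_iff_pos hC₀ hpos.isAffRoot hx).1 hpos, RS.sub_sAff_mul_apply hα n w' x⟩
  | trans _ _ ih₁ ih₂ =>
    obtain ⟨c₁, hc₁, h₁⟩ := ih₁
    obtain ⟨c₂, hc₂, h₂⟩ := ih₂
    exact ⟨c₂ + c₁, add_pos hc₂ hc₁, by rw [add_smul, ← h₁, ← h₂, sub_add_sub_cancel]⟩

theorem stepRel_sAff_mul (hC₀ : RS.IsChamber C₀) (hα : α ∈ RS.roots) {y : Equiv.Perm V}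
    (hy : y ∈ RS.affWeyl) {x : V} (hx : x ∈ RS.alcove C₀) {n : ℤ} (h : 0 < aev α n (y x)) :
    RS.stepRel (RS.pos C₀) {α} (RS.sAff α n * y) y :=
  ⟨α, ⟨hα, rfl⟩, n, rfl,
    (RS.isPosAff_iff_pos hC₀ ((RS.isAffRoot_aev hα n).comp_of_mem_affWeyl RS hy) hx).2 h⟩

theorem ordLT_transl_neg_coroot_mul (hC₀ : RS.IsChamber C₀) (hα : α ∈ RS.roots)
    {y : Equiv.Perm V} (hy : y ∈ RS.affWeyl) :
    RS.ordLT (RS.pos C₀) {α} (transl (-RS.coroot α) * y) y := by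
  obtain ⟨x, hx⟩ := RS.alcove_nonempty hC₀
  obtain ⟨n, h0, h1⟩ :=
    RS.exists_int_add_mem_Ioo hC₀ ((RS.isAffRoot_aev hα 0).comp_of_mem_affWeyl RS hy) hx
  simp only [Function.comp_apply, aev, Int.cast_zero, add_zero] at h0 h1
  have first : RS.stepRel (RS.pos C₀) {α} (RS.sAff α n * y) y :=
    RS.stepRel_sAff_mul hC₀ hα hy hx h0
  -- `s_{(α,n)}` turns the value `t ∈ (0,1)` of `(α,n)` at `y x` into `-t`,
  -- so `(α,n+1)` takes the value `1 - t`
  have second : RS.stepRel (RS.pos C₀) {α} (RS.sAff α (n + 1) * (RS.sAff α n * y))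
      (RS.sAff α n * y) := by
    refine RS.stepRel_sAff_mul hC₀ hα (mul_mem (RS.sAff_mem_affWeyl hα n) hy) hx ?_
    rw [Equiv.Perm.mul_apply, RS.sAff_apply hα]
    simp only [aev, map_sub, map_smul, smul_eq_mul, RS.root_coroot_two α hα]
    push_cast
    linarith
  rw [← RS.sAff_add_one_mul_sAff hα n, mul_assoc]
  exact .head second (.single first)

theorem ordLT_transl_zsmul_mul (hC₀ : RS.IsChamber C₀) (hα : α ∈ RS.roots) {k : ℤ}
    (hk : k < 0) {y : Equiv.Perm V} (hy : y ∈ RS.affWeyl) :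
    RS.ordLT (RS.pos C₀) {α} (transl (k • RS.coroot α) * y) y := by
  replace hk : k ≤ -1 := by omega
  induction k, hk using Int.leInductionDown generalizing y with
  | base => simpa only [neg_one_zsmul] using RS.ordLT_transl_neg_coroot_mul hC₀ hα hy
  | pred k _ ih =>
    rw [sub_smul, one_smul, sub_eq_add_neg, transl_add, mul_assoc]
    exact (ih (mul_mem (RS.transl_neg_coroot_mem_affWeyl hα) hy)).trans
      (RS.ordLT_transl_neg_coroot_mul hC₀ hα hy)

theorem ordLT_mul_of_pos_smul_coroot (hC₀ : RS.IsChamber C₀) (hα : α ∈ RS.roots)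
    {u w' : Equiv.Perm V} (hu : u ∈ RS.reflSubgroup α) (hw' : w' ∈ RS.affWeyl) {x : V}
    (hx : x ∈ RS.alcove C₀) {c : ℝ} (hc : 0 < c) (h : w' x - (u * w') x = c • RS.coroot α) :
    RS.ordLT (RS.pos C₀) {α} (u * w') w' := by
  rcases RS.eq_transl_or_eq_sAff_of_mem_reflSubgroup hα hu with ⟨k, rfl⟩ | ⟨n, rfl⟩
  · rw [Equiv.Perm.mul_apply, transl, Equiv.coe_addLeft, sub_add_cancel_right, ← neg_smul,
      ← Int.cast_smul_eq_zsmul ℝ, RS.smul_coroot_inj hα, Int.cast_neg] at h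
    have hk : (k : ℝ) < 0 := by linarith
    exact RS.ordLT_transl_zsmul_mul hC₀ hα (by exact_mod_cast hk) hw'
  · rw [RS.sub_sAff_mul_apply hα, RS.smul_coroot_inj hα] at h
    exact .single (RS.stepRel_sAff_mul hC₀ hα hw' hx (h ▸ hc))

end RootSystemData

theorem stmt5_general {V : Type*} [AddCommGroup V] [Module ℝ V]
    (RS : RootSystemData V) (C₀ : Set V) (hC₀ : RS.IsChamber C₀)
    (α : Module.Dual ℝ V) (hα : α ∈ RS.roots)
    (w w' : Equiv.Perm V) (hw'W : w' ∈ RS.affWeyl) :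
    RS.ordLT (RS.pos C₀) {α} w w' ↔
      ((∃ u ∈ RS.reflSubgroup α, w = u * w') ∧
        ∀ x ∈ RS.alcove C₀, ∃ c : ℝ, 0 < c ∧ w' x - w x = c • RS.coroot α) := by
  refine ⟨fun h => ⟨RS.exists_mem_reflSubgroup_of_ordLT h,
    fun x hx => RS.exists_pos_smul_coroot_of_ordLT hC₀ h hx⟩, ?_⟩
  rintro ⟨⟨u, hu, rfl⟩, hpos⟩
  obtain ⟨x, hx⟩ := RS.alcove_nonempty hC₀
  obtain ⟨c, hc, h⟩ := hpos x hx
  exact RS.ordLT_mul_of_pos_smul_coroot hC₀ hα hu hw'W hx hc h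

/-- Corollary 1.8(a): for `w, w' ∈ W̃` and `α ∈ Φ`, one has `w <_α w'`
iff `w ∈ W̃_α w'` and `w'(x) − w(x)` is a positive multiple of `α̌` for all `x ∈ A₀`. -/
theorem stmt5 {V : Type*} [AddCommGroup V] [Module ℝ V] [FiniteDimensional ℝ V]
    (RS : RootSystemData V) (C₀ : Set V) (hC₀ : RS.IsChamber C₀)
    (α : Module.Dual ℝ V) (hα : α ∈ RS.roots)
    (w w' : Equiv.Perm V) (hwW : w ∈ RS.affWeyl) (hw'W : w' ∈ RS.affWeyl) :
    RS.ordLT (RS.pos C₀) {α} w w' ↔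
      ((∃ u ∈ RS.reflSubgroup α, w = u * w') ∧
        ∀ x ∈ RS.alcove C₀, ∃ c : ℝ, 0 < c ∧ w' x - w x = c • RS.coroot α) :=
  stmt5_general RS C₀ hC₀ α hα w w' hw'W
end
end

section
/- Let μ̄ ∈ V^𝒞 be a regular quasi-admissible tuple and let ψ ∈ Ψ. Then for every x ∈ V^{≤μ̄} and every α ∈ Φ such that ⟨α, ψ̌⟩ > 0 and ⟨ψ, x⟩ = μ_ψ, one has ⟨α, x⟩ > 0. -/
open scoped Classical

noncomputable section

/-!
Pick a chamber `C` whose positive system is lexicographic for `(ψ̌, -α̌)`: it contains every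
root `β` with `β(ψ̌) > 0`, and a root `β` with `β(ψ̌) = 0` only if `β(α̌) ≤ 0`. Like the chamber
`C₂` of `ψ`, it has `ψ̌` in its closure, so the two are joined by a gallery crossing only walls
`β` with `β(ψ̌) = 0`. Across such a wall quasi-admissibility changes `μ` by a multiple of `β̌`,
and `ψ(β̌) = 0`; hence `ψ(μ_C) = μ_ψ = ψ(x)`.

Write `μ_C - x = ∑ c_β β̌` with `c_β > 0` and `β` positive on `C`. Every `ψ(β̌) ≥ 0` while
`∑ c_β ψ(β̌) = 0`, so only roots with `β(ψ̌) = 0` occur, and for those `α(β̌) ≤ 0`. Therefore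
`α(x) ≥ α(μ_C) > 0`, by regularity of `μ` and because `α` is positive on `C`.

The sign comparisons between `ψ(β̌)` and `β(ψ̌)`, and between `α(β̌)` and `β(α̌)`, come from
the reflection-invariant positive definite form `∑_β β(x) β(y)` on `V`.
-/

lemma Module.Dual.eq_zero_of_span_eq_top {V : Type*} [AddCommGroup V] [Module ℝ V]
    {S : Set (Module.Dual ℝ V)} (hS : Submodule.span ℝ S = ⊤) {x : V}
    (h : ∀ f ∈ S, f x = 0) : x = 0 := by
  have := LinearMap.ext_on hS (f := Module.Dual.eval ℝ V x) (g := 0) h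
  exact (Module.forall_dual_apply_eq_zero_iff ℝ x).1 fun f => LinearMap.congr_fun this f

lemma exists_pos_apply_add_smul {V : Type*} [AddCommGroup V] [Module ℝ V]
    {s : Set (Module.Dual ℝ V)} (hs : s.Finite) (x y : V) :
    ∃ t : ℝ, 0 < t ∧ ∀ f ∈ s, 0 < f x → 0 < f (x + t • y) := by
  have h : ∀ f ∈ s, ∀ᶠ t in nhds (0 : ℝ), 0 < f x → 0 < f (x + t • y) := by
    intro f _
    by_cases hf : 0 < f x
    · have hc : Continuous fun t : ℝ => f x + t * f y := by fun_prop
      have := (hc.tendsto 0).eventually (lt_mem_nhds (by simpa using hf))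
      filter_upwards [this] with t ht _
      simpa using ht
    · exact Filter.Eventually.of_forall fun _ h => absurd h hf
  obtain ⟨t, ht, ht0⟩ := (((Filter.eventually_all_finite hs).2 h).filter_mono
    nhdsWithin_le_nhds |>.and (self_mem_nhdsWithin (s := Set.Ioi 0))).exists
  exact ⟨t, ht0, ht⟩

namespace RootSystemData

variable {V : Type*} [AddCommGroup V] [Module ℝ V] (RS : RootSystemData V)

def dualRefl (β γ : Module.Dual ℝ V) : Module.Dual ℝ V := γ - γ (RS.coroot β) • β

lemma sAff_zero_apply {β : Module.Dual ℝ V} (hβ : β ∈ RS.roots) (x : V) :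
    RS.sAff β 0 x = x - β x • RS.coroot β := by
  simp [sAff, RS.root_coroot_two β hβ]

lemma apply_sAff_zero {β : Module.Dual ℝ V} (hβ : β ∈ RS.roots) (γ : Module.Dual ℝ V) (x : V) :
    γ (RS.sAff β 0 x) = RS.dualRefl β γ x := by
  simp only [RS.sAff_zero_apply hβ, dualRefl, map_sub, map_smul, LinearMap.sub_apply,
    LinearMap.smul_apply, smul_eq_mul]
  ring

lemma sAff_zero_involutive {β : Module.Dual ℝ V} (hβ : β ∈ RS.roots) :
    Function.Involutive (RS.sAff β 0) := by
  intro x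
  simp only [RS.sAff_zero_apply hβ, map_sub, map_smul, smul_eq_mul, RS.root_coroot_two β hβ]
  module

lemma dualRefl_mem {β γ : Module.Dual ℝ V} (hβ : β ∈ RS.roots) (hγ : γ ∈ RS.roots) :
    RS.dualRefl β γ ∈ RS.roots :=
  RS.reflect_mem β hβ γ hγ

lemma dualRefl_dualRefl {β : Module.Dual ℝ V} (hβ : β ∈ RS.roots) (γ : Module.Dual ℝ V) :
    RS.dualRefl β (RS.dualRefl β γ) = γ := by
  simp only [dualRefl, LinearMap.sub_apply, LinearMap.smul_apply, smul_eq_mul,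
    RS.root_coroot_two β hβ]
  module

lemma dualRefl_self {β : Module.Dual ℝ V} (hβ : β ∈ RS.roots) : RS.dualRefl β β = -β := by
  rw [dualRefl, RS.root_coroot_two β hβ]
  module

lemma neg_mem {β : Module.Dual ℝ V} (hβ : β ∈ RS.roots) : -β ∈ RS.roots :=
  RS.dualRefl_self hβ ▸ RS.dualRefl_mem hβ hβ

def form : LinearMap.BilinForm ℝ V :=
  ∑ β ∈ RS.finite.toFinset, (LinearMap.mul ℝ ℝ).compl₁₂ β β

lemma form_apply (x y : V) : RS.form x y = ∑ β ∈ RS.finite.toFinset, β x * β y := by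
  simp [form, LinearMap.sum_apply]

lemma form_comm (x y : V) : RS.form x y = RS.form y x := by
  simp only [form_apply, mul_comm]

lemma form_self_pos {x : V} (hx : x ≠ 0) : 0 < RS.form x x := by
  obtain ⟨β, hβ, hβx⟩ : ∃ β ∈ RS.roots, β x ≠ 0 := by
    by_contra! h
    exact hx (Module.Dual.eq_zero_of_span_eq_top RS.span_top h)
  rw [form_apply]
  exact Finset.sum_pos' (fun _ _ => mul_self_nonneg _)
    ⟨β, RS.finite.mem_toFinset.2 hβ, mul_self_pos.2 hβx⟩

lemma form_sAff_zero {α : Module.Dual ℝ V} (hα : α ∈ RS.roots) (x y : V) :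
    RS.form (RS.sAff α 0 x) (RS.sAff α 0 y) = RS.form x y := by
  simp only [form_apply]
  simp only [RS.apply_sAff_zero hα]
  have hmaps : ∀ β ∈ RS.finite.toFinset, RS.dualRefl α β ∈ RS.finite.toFinset := fun β hβ => by
    rw [Set.Finite.mem_toFinset] at hβ ⊢
    exact RS.dualRefl_mem hα hβ
  exact Finset.sum_nbij' _ _ hmaps hmaps (fun β _ => RS.dualRefl_dualRefl hα β)
    (fun β _ => RS.dualRefl_dualRefl hα β) fun _ _ => rfl

lemma apply_mul_form_coroot {α : Module.Dual ℝ V} (hα : α ∈ RS.roots) (x : V) :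
    α x * RS.form (RS.coroot α) (RS.coroot α) = 2 * RS.form (RS.coroot α) x := by
  have h := RS.form_sAff_zero hα (RS.coroot α) x
  simp only [RS.sAff_zero_apply hα, RS.root_coroot_two α hα, map_sub, map_smul,
    LinearMap.sub_apply, LinearMap.smul_apply, smul_eq_mul] at h
  linarith [RS.form_comm x (RS.coroot α)]

lemma form_coroot_pos {α : Module.Dual ℝ V} (hα : α ∈ RS.roots) :
    0 < RS.form (RS.coroot α) (RS.coroot α) := by
  refine RS.form_self_pos fun h => ?_
  have := RS.root_coroot_two α hα
  rw [h, map_zero] at this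
  norm_num at this

lemma pairing_pos_comm {α β : Module.Dual ℝ V} (hα : α ∈ RS.roots) (hβ : β ∈ RS.roots) :
    0 < α (RS.coroot β) ↔ 0 < β (RS.coroot α) := by
  have hα' := RS.apply_mul_form_coroot hα (RS.coroot β)
  have hβ' := RS.apply_mul_form_coroot hβ (RS.coroot α)
  rw [RS.form_comm (RS.coroot β) (RS.coroot α)] at hβ'
  rw [← mul_pos_iff_of_pos_right (RS.form_coroot_pos hα), hα', ← hβ',
    mul_pos_iff_of_pos_right (RS.form_coroot_pos hβ)]

lemma form_sq_lt {x y : V} (hx : x ≠ 0) (hxy : ∀ t : ℝ, y ≠ t • x) :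
    RS.form x y ^ 2 < RS.form x x * RS.form y y := by
  have hxx := RS.form_self_pos hx
  have hz : RS.form x x • y - RS.form x y • x ≠ 0 := fun h => by
    refine hxy (RS.form x y / RS.form x x) ?_
    rw [div_eq_inv_mul, mul_smul, ← sub_eq_zero.1 h, inv_smul_smul₀ hxx.ne']
  have := RS.form_self_pos hz
  simp only [map_sub, map_smul, LinearMap.sub_apply, LinearMap.smul_apply, smul_eq_mul,
    RS.form_comm y x] at this
  nlinarith

lemma coroot_ne_smul_coroot {α β : Module.Dual ℝ V} (hα : α ∈ RS.roots) (hβ : β ∈ RS.roots)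
    (h₁ : β ≠ α) (h₂ : β ≠ -α) (t : ℝ) : RS.coroot β ≠ t • RS.coroot α := by
  intro ht
  have ha := RS.form_coroot_pos hα
  have hb := RS.form_coroot_pos hβ
  have hβα : β = (t * RS.form (RS.coroot α) (RS.coroot α) / RS.form (RS.coroot β) (RS.coroot β))
      • α := by
    ext x
    have h1 := RS.apply_mul_form_coroot hα x
    have h2 := RS.apply_mul_form_coroot hβ x
    have h3 : RS.form (RS.coroot β) x = t * RS.form (RS.coroot α) x := by
      rw [ht, map_smul, LinearMap.smul_apply, smul_eq_mul]
    rw [LinearMap.smul_apply, smul_eq_mul, div_mul_eq_mul_div, eq_div_iff hb.ne']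
    linear_combination h2 + 2 * h3 - t * h1
  rcases RS.reduced α hα _ (hβα ▸ hβ) with h | h
  · exact h₁ (by rw [hβα, h, one_smul])
  · exact h₂ (by rw [hβα, h, neg_one_smul ℝ α])

lemma pairing_mul_pairing_lt_four {α β : Module.Dual ℝ V} (hα : α ∈ RS.roots)
    (hβ : β ∈ RS.roots) (h₁ : β ≠ α) (h₂ : β ≠ -α) :
    α (RS.coroot β) * β (RS.coroot α) < 4 := by
  have hlt := RS.form_sq_lt (fun h => by simpa [h] using RS.root_coroot_two α hα)
    (RS.coroot_ne_smul_coroot hα hβ h₁ h₂)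
  have hα' := RS.apply_mul_form_coroot hα (RS.coroot β)
  have hβ' := RS.apply_mul_form_coroot hβ (RS.coroot α)
  rw [RS.form_comm (RS.coroot β) (RS.coroot α)] at hβ'
  have hprod : α (RS.coroot β) * β (RS.coroot α) *
      (RS.form (RS.coroot α) (RS.coroot α) * RS.form (RS.coroot β) (RS.coroot β)) =
      4 * RS.form (RS.coroot α) (RS.coroot β) ^ 2 := by
    linear_combination (β (RS.coroot α) * RS.form (RS.coroot β) (RS.coroot β)) * hα' +
      (2 * RS.form (RS.coroot α) (RS.coroot β)) * hβ'
  exact lt_of_mul_lt_mul_right (by linarith) (mul_pos (RS.form_coroot_pos hα)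
    (RS.form_coroot_pos hβ)).le

/-- In a reduced crystallographic root system, `α(β̌) > 0` forces `α(β̌) = 1` or `β(α̌) = 1`,
so one of `α - β = s_β α` and `β - α = s_α β` is a root. -/
lemma sub_mem_roots_of_pairing_pos {α β : Module.Dual ℝ V} (hα : α ∈ RS.roots)
    (hβ : β ∈ RS.roots) (hne : α ≠ β) (h : 0 < α (RS.coroot β)) : α - β ∈ RS.roots := by
  have h' := (RS.pairing_pos_comm hα hβ).1 h
  have hneg : α ≠ -β := by
    rintro rfl
    rw [LinearMap.neg_apply, RS.root_coroot_two β hβ] at h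
    norm_num at h
  have hlt := RS.pairing_mul_pairing_lt_four hβ hα hne hneg
  obtain ⟨n, hn⟩ := RS.crystallographic β hβ α hα
  obtain ⟨m, hm⟩ := RS.crystallographic α hα β hβ
  rw [hn] at h hlt
  rw [hm] at h' hlt
  have : n = 1 ∨ m = 1 := by
    have : 0 < n := by exact_mod_cast h
    have : 0 < m := by exact_mod_cast h'
    have : m * n < 4 := by exact_mod_cast hlt
    by_contra! h
    nlinarith [(by omega : 2 ≤ n), (by omega : 2 ≤ m)]
  rcases this with rfl | rfl
  · have := RS.dualRefl_mem hβ hα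
    rwa [dualRefl, hn, Int.cast_one, one_smul] at this
  · have := RS.neg_mem (RS.dualRefl_mem hα hβ)
    rwa [dualRefl, hm, Int.cast_one, one_smul, neg_sub] at this

def posOf (v : V) : Set (Module.Dual ℝ V) := {γ | γ ∈ RS.roots ∧ 0 < γ v}

variable {RS} in
lemma neg_notMem_posOf {v : V} {γ : Module.Dual ℝ V} (h : γ ∈ RS.posOf v) : -γ ∉ RS.posOf v :=
  fun h' => by linarith [h.2, h'.2, LinearMap.neg_apply γ v]

lemma neg_mem_posOf {v : V} (hv : RS.IsRegularPt v) {γ : Module.Dual ℝ V} (hγ : γ ∈ RS.roots)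
    (h : γ ∉ RS.posOf v) : -γ ∈ RS.posOf v := by
  refine ⟨RS.neg_mem hγ, ?_⟩
  rw [LinearMap.neg_apply, neg_pos]
  exact lt_of_le_of_ne (not_lt.1 fun h' => h ⟨hγ, h'⟩) (hv γ hγ)

lemma posOf_induction {v : V} {p : Module.Dual ℝ V → Prop}
    (simple : ∀ β ∈ simplesOf (RS.posOf v), p β)
    (add : ∀ β ∈ RS.posOf v, ∀ γ ∈ RS.posOf v, β + γ ∈ RS.posOf v → p β → p γ → p (β + γ)) :
    ∀ γ ∈ RS.posOf v, p γ := by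
  by_contra! hex
  have hfin : {γ | γ ∈ RS.posOf v ∧ ¬p γ}.Finite := RS.finite.subset fun _ h => h.1.1
  obtain ⟨γ, ⟨hγ, hpγ⟩, hmin⟩ := Set.exists_min_image _ (fun γ => γ v) hfin hex
  have hsplit : ∃ β ∈ RS.posOf v, ∃ δ ∈ RS.posOf v, γ = β + δ := by
    by_contra h
    exact hpγ (simple γ ⟨hγ, h⟩)
  obtain ⟨β, hβ, δ, hδ, rfl⟩ := hsplit
  have hpβ : p β := by
    by_contra h
    linarith [hmin β ⟨hβ, h⟩, hδ.2, LinearMap.add_apply β δ v]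
  have hpδ : p δ := by
    by_contra h
    linarith [hmin δ ⟨hδ, h⟩, hβ.2, LinearMap.add_apply β δ v]
  exact hpγ (add β hβ δ hδ hγ hpβ hpδ)

lemma span_simplesOf_posOf {v : V} (hv : RS.IsRegularPt v) :
    Submodule.span ℝ (simplesOf (RS.posOf v)) = ⊤ := by
  have hpos : ∀ γ ∈ RS.posOf v, γ ∈ Submodule.span ℝ (simplesOf (RS.posOf v)) :=
    RS.posOf_induction (fun β hβ => Submodule.subset_span hβ)
      fun _ _ _ _ _ hβ hγ => add_mem hβ hγ
  rw [eq_top_iff, ← RS.span_top, Submodule.span_le]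
  intro γ hγ
  by_cases h : γ ∈ RS.posOf v
  · exact hpos γ h
  · simpa using Submodule.neg_mem _ (hpos _ (RS.neg_mem_posOf hv hγ h))

lemma sub_mem_posOf_of_pairing_pos {v : V} (hv : RS.IsRegularPt v) {β γ : Module.Dual ℝ V}
    (hβ : β ∈ simplesOf (RS.posOf v)) (hγ : γ ∈ RS.posOf v) (hne : γ ≠ β)
    (h : 0 < γ (RS.coroot β)) : γ - β ∈ RS.posOf v := by
  by_contra hn
  have hroot := RS.sub_mem_roots_of_pairing_pos hγ.1 hβ.1.1 hne h
  refine hβ.2 ⟨γ, hγ, -(γ - β), RS.neg_mem_posOf hv hroot hn, ?_⟩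
  abel

/-- A minimal counterexample `γ` would yield the smaller counterexample `γ - β`. -/
lemma dualRefl_mem_posOf {v : V} (hv : RS.IsRegularPt v) {β γ : Module.Dual ℝ V}
    (hβ : β ∈ simplesOf (RS.posOf v)) (hγ : γ ∈ RS.posOf v) (hne : γ ≠ β) :
    RS.dualRefl β γ ∈ RS.posOf v := by
  have hβr : β ∈ RS.roots := hβ.1.1
  have h2 := RS.root_coroot_two β hβr
  by_contra hcon
  have hfin : {γ | γ ∈ RS.posOf v ∧ γ ≠ β ∧ RS.dualRefl β γ ∉ RS.posOf v}.Finite :=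
    RS.finite.subset fun _ h => h.1.1
  obtain ⟨γ, ⟨hγ, hne, hγs⟩, hmin⟩ :=
    Set.exists_min_image _ (fun γ => γ v) hfin ⟨γ, hγ, hne, hcon⟩
  set δ := -RS.dualRefl β γ with hδdef
  have hδ : δ ∈ RS.posOf v := RS.neg_mem_posOf hv (RS.dualRefl_mem hβr hγ.1) hγs
  have hδv : δ v = γ (RS.coroot β) * β v - γ v := by
    simp only [hδdef, dualRefl, LinearMap.neg_apply, LinearMap.sub_apply, LinearMap.smul_apply,
      smul_eq_mul]
    ring
  have hk : 0 < γ (RS.coroot β) := pos_of_mul_pos_left (by linarith [hδ.2, hγ.2]) hβ.1.2.le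
  have hδβ : δ ≠ β := fun h => hne <| by
    have : RS.dualRefl β γ = -β := by rw [← neg_neg (RS.dualRefl β γ), ← hδdef, h]
    rw [← RS.dualRefl_dualRefl hβr γ, this]
    simp only [dualRefl, LinearMap.neg_apply, h2]
    module
  have hδk : 0 < δ (RS.coroot β) := by
    simp only [hδdef, dualRefl, LinearMap.neg_apply, LinearMap.sub_apply, LinearMap.smul_apply,
      smul_eq_mul, h2]
    linarith
  have hγβ := RS.sub_mem_posOf_of_pairing_pos hv hβ hγ hne hk
  have hδ' := RS.sub_mem_posOf_of_pairing_pos hv hβ hδ hδβ hδk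
  have hγβne : γ - β ≠ β := fun h => by
    rcases RS.reduced β hβr 2 (by rw [two_smul, ← sub_eq_iff_eq_add.1 h]; exact hγ.1) with h | h <;>
      norm_num at h
  have hrefl : RS.dualRefl β (γ - β) = -(δ - β) := by
    simp only [hδdef, dualRefl, LinearMap.sub_apply, h2]
    module
  have := hmin (γ - β) ⟨hγβ, hγβne, hrefl ▸ neg_notMem_posOf hδ'⟩
  linarith [hβ.1.2, LinearMap.sub_apply γ β v]

lemma isRegularPt_sAff_zero {v : V} (hv : RS.IsRegularPt v) {β : Module.Dual ℝ V}
    (hβ : β ∈ RS.roots) : RS.IsRegularPt (RS.sAff β 0 v) := fun γ hγ => by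
  rw [RS.apply_sAff_zero hβ]
  exact hv _ (RS.dualRefl_mem hβ hγ)

lemma notMem_posOf_sAff_zero {v : V} {β : Module.Dual ℝ V} (hβ : β ∈ RS.posOf v) :
    β ∉ RS.posOf (RS.sAff β 0 v) := fun h => by
  have := h.2
  rw [RS.apply_sAff_zero hβ.1, RS.dualRefl_self hβ.1, LinearMap.neg_apply] at this
  linarith [hβ.2]

lemma mem_posOf_sAff_zero_iff {v : V} (hv : RS.IsRegularPt v) {β γ : Module.Dual ℝ V}
    (hβ : β ∈ simplesOf (RS.posOf v)) (h₁ : γ ≠ β) (h₂ : γ ≠ -β) :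
    γ ∈ RS.posOf (RS.sAff β 0 v) ↔ γ ∈ RS.posOf v := by
  have hβr : β ∈ RS.roots := hβ.1.1
  constructor
  · rintro ⟨hγ, hγv⟩
    rw [RS.apply_sAff_zero hβr] at hγv
    have hne : RS.dualRefl β γ ≠ β := fun h => h₂ <| by
      rw [← RS.dualRefl_dualRefl hβr γ, h, RS.dualRefl_self hβr]
    simpa only [RS.dualRefl_dualRefl hβr] using
      RS.dualRefl_mem_posOf hv hβ ⟨RS.dualRefl_mem hβr hγ, hγv⟩ hne
  · intro hγ
    refine ⟨hγ.1, ?_⟩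
    rw [RS.apply_sAff_zero hβr]
    exact (RS.dualRefl_mem_posOf hv hβ hγ h₁).2

/-- Take `a + t • (b + s • v₀)` with `s, t > 0` small. -/
lemma exists_isRegularPt_lex {v₀ : V} (hv₀ : RS.IsRegularPt v₀) (a b : V) :
    ∃ v, RS.IsRegularPt v ∧ (∀ γ ∈ RS.roots, 0 < γ a → 0 < γ v) ∧
      ∀ γ ∈ RS.posOf v, 0 ≤ γ a ∧ (γ a = 0 → 0 ≤ γ b) := by
  obtain ⟨s, hs, hsb⟩ := exists_pos_apply_add_smul RS.finite b v₀
  obtain ⟨t, ht, hta⟩ := exists_pos_apply_add_smul RS.finite a (b + s • v₀)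
  have key : ∀ γ ∈ RS.roots, 0 < γ a ∨ γ a = 0 ∧ (0 < γ b ∨ γ b = 0 ∧ 0 < γ v₀) →
      0 < γ (a + t • (b + s • v₀)) := by
    rintro γ hγ (h | ⟨ha, h⟩)
    · exact hta γ hγ h
    · have hw : 0 < γ (b + s • v₀) := by
        rcases h with h | ⟨hb, h⟩
        · exact hsb γ hγ h
        · simpa [hb] using mul_pos hs h
      rw [map_add, map_smul, ha, zero_add, smul_eq_mul]
      exact mul_pos ht hw
  have key' : ∀ γ ∈ RS.roots, γ a < 0 ∨ γ a = 0 ∧ (γ b < 0 ∨ γ b = 0 ∧ γ v₀ < 0) →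
      γ (a + t • (b + s • v₀)) < 0 := fun γ hγ h => by
    have := key (-γ) (RS.neg_mem hγ) (by simpa using h)
    rwa [LinearMap.neg_apply, neg_pos] at this
  refine ⟨a + t • (b + s • v₀), fun γ hγ h0 => ?_, fun γ hγ h => key γ hγ (Or.inl h),
    fun γ hγ => ?_⟩
  · have n1 := fun h => (key γ hγ h).ne' h0
    have n2 := fun h => (key' γ hγ h).ne h0
    simp only [imp_false, not_or, not_and, not_lt] at n1 n2
    have ha := le_antisymm n1.1 n2.1
    have hb := le_antisymm (n1.2 ha).1 (n2.2 ha).1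
    exact hv₀ γ hγ (le_antisymm ((n1.2 ha).2 hb) ((n2.2 ha).2 hb))
  · have hneg := fun h => (key' γ hγ.1 h).not_gt hγ.2
    simp only [imp_false, not_or, not_and, not_lt] at hneg
    exact ⟨hneg.1, fun ha => (hneg.2 ha).1⟩

def chamberSet (v : V) : Set V := {x | ∀ γ ∈ RS.roots, 0 < γ v → 0 < γ x}

def chamberAt {v : V} (hv : RS.IsRegularPt v) : RS.ChamberT := ⟨RS.chamberSet v, v, hv, rfl⟩

lemma exists_eq_chamberAt (C : RS.ChamberT) :
    ∃ v, ∃ hv : RS.IsRegularPt v, C = RS.chamberAt hv := by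
  obtain ⟨C, v, hv, rfl⟩ := C
  exact ⟨v, hv, rfl⟩

lemma pos_chamberAt {v : V} (hv : RS.IsRegularPt v) : RS.pos (RS.chamberAt hv).1 = RS.posOf v :=
  Set.ext fun γ => ⟨fun h => ⟨h.1, h.2 v fun _ _ h => h⟩, fun h => ⟨h.1, fun _ hx => hx γ h.1 h.2⟩⟩

lemma simples_chamberAt {v : V} (hv : RS.IsRegularPt v) :
    RS.simples (RS.chamberAt hv).1 = simplesOf (RS.posOf v) := by
  rw [simples, pos_chamberAt]

lemma chamberAt_eq_of_posOf_eq {v w : V} (hv : RS.IsRegularPt v) (hw : RS.IsRegularPt w)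
    (h : RS.posOf v = RS.posOf w) : RS.chamberAt hv = RS.chamberAt hw :=
  Subtype.ext <| Set.ext fun _ => forall₂_congr fun γ hγ =>
    imp_congr_left (by simpa [posOf, hγ] using Set.ext_iff.1 h γ)

lemma chamberSet_sAff_zero {β : Module.Dual ℝ V} (hβ : β ∈ RS.roots) (v : V) :
    RS.chamberSet (RS.sAff β 0 v) = RS.sAff β 0 '' RS.chamberSet v := by
  have hinv := RS.sAff_zero_involutive hβ
  rw [Set.image_eq_preimage_of_inverse hinv.leftInverse hinv.rightInverse]
  ext x
  simp only [chamberSet, Set.mem_ofPred_eq, Set.mem_preimage, RS.apply_sAff_zero hβ]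
  constructor
  · intro hx γ hγ hγv
    exact hx _ (RS.dualRefl_mem hβ hγ) (by rwa [RS.dualRefl_dualRefl hβ])
  · intro hx γ hγ hγv
    simpa only [RS.dualRefl_dualRefl hβ] using hx _ (RS.dualRefl_mem hβ hγ) hγv

variable {RS} in
/-- `φ ∘ μ` is constant on the chambers whose closure contains `a`, provided `φ` kills the
coroots of the walls through `a`: such chambers are joined by galleries crossing only
those walls, and quasi-admissibility moves `μ` along `β̌` across the wall of `β`. -/
lemma QuasiAdmissibleV.apply_chamberAt_eq {μ : RS.ChamberT → V} (hq : RS.QuasiAdmissibleV μ)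
    {φ : Module.Dual ℝ V} {a : V} (hφ : ∀ β ∈ RS.roots, β a = 0 → φ (RS.coroot β) = 0)
    {v w : V} (hv : RS.IsRegularPt v) (hw : RS.IsRegularPt w)
    (hva : ∀ γ ∈ RS.roots, 0 < γ a → γ ∈ RS.posOf v)
    (hwa : ∀ γ ∈ RS.roots, 0 < γ a → γ ∈ RS.posOf w) :
    φ (μ (RS.chamberAt hv)) = φ (μ (RS.chamberAt hw)) := by
  induction hn : (RS.posOf v \ RS.posOf w).ncard using Nat.strong_induction_on generalizing v
    with | _ n ih =>
  by_cases hs : ∀ β ∈ simplesOf (RS.posOf v), β ∈ RS.posOf w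
  · have hsub : RS.posOf v ⊆ RS.posOf w := RS.posOf_induction hs
      fun β _ γ _ hβγ hβ hγ => ⟨hβγ.1, by simpa using add_pos hβ.2 hγ.2⟩
    rw [RS.chamberAt_eq_of_posOf_eq hv hw (hsub.antisymm fun γ hγ => by_contra fun h =>
      neg_notMem_posOf hγ (hsub (RS.neg_mem_posOf hv hγ.1 h)))]
  push Not at hs
  obtain ⟨β, hβ, hβw⟩ := hs
  have hβr : β ∈ RS.roots := hβ.1.1
  have hβa : β a = 0 := by
    rcases lt_trichotomy (β a) 0 with h | h | h
    · exact absurd (hva _ (RS.neg_mem hβr) (by simpa using h)) (neg_notMem_posOf hβ.1)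
    · exact h
    · exact absurd (hwa β hβr h) hβw
  have hv' := RS.isRegularPt_sAff_zero hv hβr
  have hstep : φ (μ (RS.chamberAt hv)) = φ (μ (RS.chamberAt hv')) := by
    obtain ⟨c, hc⟩ := hq (RS.chamberAt hv) β (by rwa [simples_chamberAt]) (RS.chamberAt hv')
      (RS.chamberSet_sAff_zero hβr v)
    have := congrArg φ hc
    rwa [map_sub, map_smul, hφ β hβr hβa, smul_zero, sub_eq_zero] at this
  have hva' : ∀ γ ∈ RS.roots, 0 < γ a → γ ∈ RS.posOf (RS.sAff β 0 v) := fun γ hγ h =>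
    (RS.mem_posOf_sAff_zero_iff hv hβ (by rintro rfl; linarith)
      (by rintro rfl; simp [hβa] at h)).2 (hva γ hγ h)
  have hlt : (RS.posOf (RS.sAff β 0 v) \ RS.posOf w).ncard < n := by
    rw [← hn]
    refine Set.ncard_lt_ncard ⟨fun γ ⟨hγ, hγw⟩ => ?_, fun h => ?_⟩
      (RS.finite.subset fun γ h => h.1.1)
    · have h₁ : γ ≠ β := by rintro rfl; exact RS.notMem_posOf_sAff_zero hβ.1 hγ
      have h₂ : γ ≠ -β := by rintro rfl; exact hγw (RS.neg_mem_posOf hw hβr hβw)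
      exact ⟨(RS.mem_posOf_sAff_zero_iff hv hβ h₁ h₂).1 hγ, hγw⟩
    · exact RS.notMem_posOf_sAff_zero hβ.1 (h ⟨hβ.1, hβw⟩).1
  rw [hstep]
  exact ih _ hlt hv' hva' rfl

lemma form_nondegenerate : RS.form.Nondegenerate := by
  refine ⟨fun x hx => ?_, fun x hx => ?_⟩ <;> by_contra h <;>
    exact (RS.form_self_pos h).ne' (hx x)

lemma eq_of_apply_coroot_eq [FiniteDimensional ℝ V] {S : Set (Module.Dual ℝ V)}
    (hSr : S ⊆ RS.roots) (hS : Submodule.span ℝ S = ⊤) {f g : Module.Dual ℝ V}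
    (h : ∀ β ∈ S, f (RS.coroot β) = g (RS.coroot β)) : f = g := by
  obtain ⟨ℓ, hℓ⟩ : ∃ ℓ : V, ∀ y, RS.form ℓ y = (f - g) y :=
    ⟨_, LinearMap.BilinForm.apply_toDual_symm_apply (hB := RS.form_nondegenerate) _⟩
  have hℓ0 : ℓ = 0 := Module.Dual.eq_zero_of_span_eq_top hS fun β hβ => by
    have := RS.apply_mul_form_coroot (hSr hβ) ℓ
    rw [RS.form_comm (RS.coroot β) ℓ, hℓ, LinearMap.sub_apply, h β hβ, sub_self, mul_zero] at this
    exact (mul_eq_zero.1 this).resolve_right (RS.form_coroot_pos (hSr hβ)).ne'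
  ext y
  simpa [hℓ0, sub_eq_zero] using (hℓ y).symm

variable {RS}

lemma IsFundPair.apply_nonneg {v : V} {hv : RS.IsRegularPt v} {ψ : Module.Dual ℝ V} {ψv : V}
    (hfp : RS.IsFundPair (RS.chamberAt hv).1 ψ ψv) : ∀ γ ∈ RS.posOf v, 0 ≤ γ ψv := by
  obtain ⟨α₀, -, -, hco⟩ := hfp
  rw [simples_chamberAt] at hco
  refine RS.posOf_induction (fun β hβ => ?_) fun β _ γ _ _ hβ hγ => ?_
  · rw [hco β hβ]
    split_ifs <;> norm_num
  · rw [LinearMap.add_apply]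
    exact add_nonneg hβ hγ

lemma IsFundPair.mem_posOf {v : V} {hv : RS.IsRegularPt v} {ψ : Module.Dual ℝ V} {ψv : V}
    (hfp : RS.IsFundPair (RS.chamberAt hv).1 ψ ψv) {γ : Module.Dual ℝ V} (hγ : γ ∈ RS.roots)
    (h : 0 < γ ψv) : γ ∈ RS.posOf v :=
  by_contra fun hn => by
    linarith [hfp.apply_nonneg _ (RS.neg_mem_posOf hv hγ hn), LinearMap.neg_apply γ ψv]

/-- `ψ` is a positive multiple of `form ψv`: both take the same values on the simple coroots. -/
lemma IsFundPair.exists_apply_coroot_eq [FiniteDimensional ℝ V] {v : V} {hv : RS.IsRegularPt v}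
    {ψ : Module.Dual ℝ V} {ψv : V} (hfp : RS.IsFundPair (RS.chamberAt hv).1 ψ ψv) :
    ∀ β ∈ RS.roots, ∃ c > 0, ψ (RS.coroot β) = c * β ψv := by
  obtain ⟨α₀, ⟨hα₀, hψ⟩, -, hco⟩ := hfp
  rw [simples_chamberAt] at hα₀ hψ hco
  set k := RS.form (RS.coroot α₀) (RS.coroot α₀)
  have hk : 0 < k := RS.form_coroot_pos hα₀.1.1
  have hψform : ψ = (2 / k) • RS.form ψv :=
    RS.eq_of_apply_coroot_eq (fun β hβ => hβ.1.1) (RS.span_simplesOf_posOf hv) fun β hβ => by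
      have := RS.apply_mul_form_coroot hβ.1.1 ψv
      rw [hψ β hβ, LinearMap.smul_apply, smul_eq_mul, RS.form_comm ψv, hco β hβ] at *
      split_ifs at this ⊢ with h
      · subst h
        field_simp
        linarith
      · rw [show RS.form (RS.coroot β) ψv = 0 by linarith, mul_zero]
  intro β hβ
  have hb := RS.form_coroot_pos hβ
  refine ⟨2 / k * (RS.form (RS.coroot β) (RS.coroot β) / 2), by positivity, ?_⟩
  have := RS.apply_mul_form_coroot hβ ψv
  rw [hψform, LinearMap.smul_apply, smul_eq_mul, RS.form_comm ψv]
  field_simp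
  linarith

/-- Only coroots killed by `f` can occur in `y - x`. -/
lemma apply_le_of_vecLE {P : Set (Module.Dual ℝ V)} {x y : V} (hxy : RS.vecLE P x y)
    {f g : Module.Dual ℝ V} (hf : ∀ β ∈ RS.roots ∩ P, 0 ≤ f (RS.coroot β))
    (hg : ∀ β ∈ RS.roots ∩ P, f (RS.coroot β) = 0 → g (RS.coroot β) ≤ 0) (hfxy : f x = f y) :
    g y ≤ g x := by
  rcases hxy with rfl | ⟨s, c, -, hs, hsum⟩
  · exact le_rfl
  have happly : ∀ h : Module.Dual ℝ V, h y - h x = ∑ β ∈ s, c β * h (RS.coroot β) := fun h => by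
    simpa only [map_sub, map_sum, map_smul, smul_eq_mul] using congrArg h hsum
  have hterm : ∀ β ∈ s, 0 ≤ c β * f (RS.coroot β) := fun β hβ =>
    mul_nonneg (hs β hβ).2.le (hf β (hs β hβ).1)
  have hzero := (Finset.sum_eq_zero_iff_of_nonneg hterm).1 (by linarith [happly f])
  have : ∑ β ∈ s, c β * g (RS.coroot β) ≤ 0 := Finset.sum_nonpos fun β hβ =>
    mul_nonpos_of_nonneg_of_nonpos (hs β hβ).2.le <| hg β (hs β hβ).1 <|
      (mul_eq_zero.1 (hzero β hβ)).resolve_left (hs β hβ).2.ne'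
  linarith [happly g]

end RootSystemData

/-- Lemma 1.20: let `μ̄ ∈ V^𝒞` be a regular quasi-admissible tuple
and `ψ ∈ Ψ` (with fundamental coweight `ψv`, say `ψ ∈ Ψ_{C₂}`). Then for every
`x ∈ V^{≤μ̄}` and `α ∈ Φ` with `⟨α, ψ̌⟩ > 0` and `⟨ψ, x⟩ = μ_ψ = ⟨ψ, μ_{C₂}⟩`,
one has `⟨α, x⟩ > 0`. -/
theorem stmt12 {V : Type*} [AddCommGroup V] [Module ℝ V] [FiniteDimensional ℝ V]
    (RS : RootSystemData V)
    (μ : RS.ChamberT → V) (hq : RS.QuasiAdmissibleV μ) (hreg : RS.RegularV μ)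
    (ψ : Module.Dual ℝ V) (ψv : V)
    (C₂ : RS.ChamberT) (hfp : RS.IsFundPair C₂.1 ψ ψv)
    (x : V) (hx : ∀ C : RS.ChamberT, RS.vecLE (RS.pos C.1) x (μ C))
    (α : Module.Dual ℝ V) (hα : α ∈ RS.roots)
    (hαψ : 0 < α ψv) (hψx : ψ x = ψ (μ C₂)) :
    0 < α x := by
  obtain ⟨m, hm, hμ⟩ := hreg
  obtain ⟨v₂, hv₂, rfl⟩ := RS.exists_eq_chamberAt C₂
  obtain ⟨v, hv, hψv, hlex⟩ := RS.exists_isRegularPt_lex hv₂ ψv (-RS.coroot α)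
  have hψ := hfp.exists_apply_coroot_eq
  have hψμ : ψ (μ (RS.chamberAt hv)) = ψ (μ (RS.chamberAt hv₂)) :=
    hq.apply_chamberAt_eq (fun β hβ h0 => by obtain ⟨c, -, hc⟩ := hψ β hβ; rw [hc, h0, mul_zero])
      hv hv₂ (fun γ hγ h => ⟨hγ, hψv γ hγ h⟩) fun _ hγ h => hfp.mem_posOf hγ h
  have hψβ : ∀ β ∈ RS.roots ∩ RS.pos (RS.chamberAt hv).1, 0 ≤ ψ (RS.coroot β) := by
    rintro β ⟨hβ, hβv⟩
    obtain ⟨c, hc, h⟩ := hψ β hβ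
    rw [RS.pos_chamberAt] at hβv
    exact h ▸ mul_nonneg hc.le (hlex β hβv).1
  have hαβ : ∀ β ∈ RS.roots ∩ RS.pos (RS.chamberAt hv).1,
      ψ (RS.coroot β) = 0 → α (RS.coroot β) ≤ 0 := by
    rintro β ⟨hβ, hβv⟩ h0
    obtain ⟨c, hc, h⟩ := hψ β hβ
    rw [RS.pos_chamberAt] at hβv
    rw [h, mul_eq_zero, or_iff_right hc.ne'] at h0
    have := (hlex β hβv).2 h0
    rw [map_neg, neg_nonneg] at this
    exact not_lt.1 fun h => this.not_gt ((RS.pairing_pos_comm hα hβ).1 h)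
  have hle := RS.apply_le_of_vecLE (hx (RS.chamberAt hv)) hψβ hαβ (hψx.trans hψμ.symm)
  have hαμ := hμ (RS.chamberAt hv) α (by rw [RS.pos_chamberAt]; exact ⟨hα, hψv α hα hαψ⟩)
  linarith
end
end
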